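/- arXiv:2510.08364 — 2 statements merged into one kernel-verified Lean document; each statement's English description precedes it below -/
import Mathlib

section
/- Reverse Wyner inequality: given a random variable X with finite alphabet 𝒳 and distribution P_X, for every bijective function f : 𝒳 → {1, 2, …, |𝒳|}, E[log f(X)] ≥ H(X) − log(1 + log|𝒳|), where H(X) = Σ_x P_X(x) log(1/P_X(x)) is the Shannon entropy in nats. -/
open Finset Real

theorem reverse_wyner {X : Type*} [Fintype X] [Nonempty X]
    (P : X → ℝ) (hP0 : ∀ x, 0 ≤ P x) (hP1 : ∑ x : X, P x = 1)
    (f : X ≃ Fin (Fintype.card X)) :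
    (-∑ x : X, P x * Real.log (P x)) - Real.log (1 + Real.log (Fintype.card X)) ≤
      ∑ x : X, P x * Real.log ((f x : ℕ) + 1) := by
  have hn1 : 1 ≤ Fintype.card X := Fintype.card_pos
  set g : X → ℝ := fun x => ((f x : ℕ) : ℝ) + 1 with hg
  have hg0 : ∀ x, (0 : ℝ) < g x := fun x => by positivity
  set S : Finset X := Finset.univ.filter (fun x => P x ≠ 0) with hS
  have hSsum : ∑ x ∈ S, P x = 1 := by
    rw [hS, Finset.sum_filter_ne_zero, hP1]
  have hSpos : ∀ x ∈ S, 0 < P x := by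
    intro x hx
    rw [hS, Finset.mem_filter] at hx
    exact lt_of_le_of_ne (hP0 x) (Ne.symm hx.2)
  have hSne : S.Nonempty := by
    by_contra h
    rw [Finset.not_nonempty_iff_eq_empty] at h
    rw [h, Finset.sum_empty] at hSsum
    norm_num at hSsum
  -- Jensen
  have jensen : ∑ x ∈ S, P x * Real.log ((P x * g x)⁻¹) ≤
      Real.log (∑ x ∈ S, P x * (P x * g x)⁻¹) := by
    have := (strictConcaveOn_log_Ioi.concaveOn).le_map_sum
      (t := S) (w := P) (p := fun x => (P x * g x)⁻¹)
      (fun i _ => hP0 i) hSsum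
      (fun i hi => by
        have h1 := hSpos i hi
        have h2 := hg0 i
        simp only [Set.mem_Ioi]
        positivity)
    simpa using this
  have key : ∑ x ∈ S, P x * (P x * g x)⁻¹ = ∑ x ∈ S, (g x)⁻¹ := by
    refine Finset.sum_congr rfl fun x hx => ?_
    have hx' := hSpos x hx
    field_simp
  have hsub : ∑ x ∈ S, (g x)⁻¹ ≤ ∑ x : X, (g x)⁻¹ :=
    Finset.sum_le_sum_of_subset_of_nonneg (Finset.subset_univ S)
      (fun x _ _ => le_of_lt (by positivity))
  have hharm : ∑ x : X, (g x)⁻¹ = (harmonic (Fintype.card X) : ℝ) := by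
    rw [Fintype.sum_equiv f (fun x => (g x)⁻¹)
      (fun i : Fin (Fintype.card X) => (((i : ℕ) : ℝ) + 1)⁻¹) (fun x => rfl)]
    rw [Fin.sum_univ_eq_sum_range (fun i => (((i : ℕ) : ℝ) + 1)⁻¹) (Fintype.card X)]
    unfold harmonic
    push_cast
    rfl
  have hharmle : (harmonic (Fintype.card X) : ℝ) ≤ 1 + Real.log (Fintype.card X) :=
    harmonic_le_one_add_log _
  have hpos : 0 < ∑ x ∈ S, (g x)⁻¹ :=
    Finset.sum_pos (fun x _ => by positivity) hSne
  have hlog : Real.log (∑ x ∈ S, P x * (P x * g x)⁻¹)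
      ≤ Real.log (1 + Real.log (Fintype.card X)) := by
    rw [key]
    exact Real.log_le_log hpos (hsub.trans (hharm ▸ hharmle))
  -- rewrite LHS
  have hL : (-∑ x : X, P x * Real.log (P x)) - ∑ x : X, P x * Real.log (g x)
      = ∑ x ∈ S, P x * Real.log ((P x * g x)⁻¹) := by
    have e1 : ∑ x : X, P x * Real.log (P x) = ∑ x ∈ S, P x * Real.log (P x) := by
      rw [hS, Finset.sum_filter_of_ne]
      intro x _ h
      by_contra h0
      exact h (by simp [h0])
    have e2 : ∑ x : X, P x * Real.log (g x) = ∑ x ∈ S, P x * Real.log (g x) := by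
      rw [hS, Finset.sum_filter_of_ne]
      intro x _ h
      by_contra h0
      exact h (by simp [h0])
    rw [e1, e2]
    have e3 : ∀ x ∈ S, P x * Real.log ((P x * g x)⁻¹)
        = -(P x * Real.log (P x)) - P x * Real.log (g x) := by
      intro x hx
      have hx' := hSpos x hx
      rw [Real.log_inv, Real.log_mul (ne_of_gt hx') (ne_of_gt (hg0 x))]
      ring
    rw [Finset.sum_congr rfl e3, Finset.sum_sub_distrib, Finset.sum_neg_distrib]
  have final : (-∑ x : X, P x * Real.log (P x)) - ∑ x : X, P x * Real.log (g x)
      ≤ Real.log (1 + Real.log (Fintype.card X)) := by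
    rw [hL]; exact jensen.trans hlog
  have he : ∑ x : X, P x * Real.log (g x) = ∑ x : X, P x * Real.log ((f x : ℕ) + 1) := rfl
  linarith [final]
end

section
/- If X is a random variable with finite alphabet 𝒳 and G : 𝒳 → {1,…,|𝒳|} is the probability-rank function (a bijection ranking elements in decreasing order of probability, so that P_X(x) ≥ P_X(x') implies G(x) ≤ G(x') after tie-breaking), then E[log G(X)] ≤ H(X), where H is the Shannon entropy in nats. -/
theorem wyner_guessing {X : Type*} [Fintype X] [Nonempty X]
    (P : X → ℝ) (hP0 : ∀ x, 0 ≤ P x) (hP1 : ∑ x : X, P x = 1)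
    (G : X ≃ Fin (Fintype.card X))
    (hG : ∀ x x', (G x : ℕ) < (G x' : ℕ) → P x' ≤ P x) :
    ∑ x : X, P x * Real.log ((G x : ℕ) + 1) ≤ -∑ x : X, P x * Real.log (P x) := by
  have key : ∀ x : X, P x * Real.log ((G x : ℕ) + 1) ≤ -(P x * Real.log (P x)) := by
    intro x
    rcases eq_or_lt_of_le (hP0 x) with h0 | h0
    · simp [← h0]
    · set k := (G x : ℕ) with hk
      have hkn : k < Fintype.card X := (G x).isLt
      set S := Finset.univ.filter (fun y => (G y : ℕ) ≤ k) with hS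
      have hcard : k + 1 ≤ S.card := by
        have h := Finset.card_le_card_of_injOn
          (f := fun j => G.symm ⟨min j k, lt_of_le_of_lt (min_le_right _ _) hkn⟩)
          (s := Finset.range (k + 1)) (t := S) ?_ ?_
        · simpa using h
        · intro j hj
          simp only [hS, Finset.mem_coe, Finset.mem_filter, Finset.mem_univ, true_and, Equiv.apply_symm_apply]
          exact min_le_right _ _
        · intro a ha b hb hab
          simp only [Finset.coe_range, Set.mem_Iio, Nat.lt_succ_iff] at ha hb
          have := G.symm.injective hab
          simpa [min_eq_left ha, min_eq_left hb] using congrArg Fin.val this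
      have hle : ∀ y ∈ S, P x ≤ P y := by
        intro y hy
        simp only [hS, Finset.mem_filter, Finset.mem_univ, true_and] at hy
        rcases lt_or_eq_of_le hy with h | h
        · exact hG y x h
        · have : y = x := G.injective (Fin.ext h)
          simp [this]
      have hsum : (k + 1 : ℝ) * P x ≤ 1 := by
        have h1 : (k + 1 : ℝ) * P x ≤ (S.card : ℝ) * P x := by
          apply mul_le_mul_of_nonneg_right _ (hP0 x)
          exact_mod_cast hcard
        have h2 : (S.card : ℝ) * P x ≤ ∑ y ∈ S, P y := by
          calc (S.card : ℝ) * P x = ∑ _y ∈ S, P x := by rw [Finset.sum_const, nsmul_eq_mul]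
          _ ≤ ∑ y ∈ S, P y := Finset.sum_le_sum hle
        have h3 : ∑ y ∈ S, P y ≤ 1 := by
          rw [← hP1]
          exact Finset.sum_le_sum_of_subset_of_nonneg (Finset.subset_univ S)
            (fun y _ _ => hP0 y)
        linarith
      have hlog : Real.log ((k : ℝ) + 1) ≤ -Real.log (P x) := by
        have hne1 : ((k : ℝ) + 1) ≠ 0 := by positivity
        have := Real.log_nonpos (by positivity) (by nlinarith : ((k : ℝ) + 1) * P x ≤ 1)
        rw [Real.log_mul hne1 (ne_of_gt h0)] at this
        linarith
      calc P x * Real.log ((k : ℝ) + 1) ≤ P x * (-Real.log (P x)) :=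
            mul_le_mul_of_nonneg_left hlog (hP0 x)
        _ = -(P x * Real.log (P x)) := by ring
  calc ∑ x : X, P x * Real.log ((G x : ℕ) + 1)
      ≤ ∑ x : X, -(P x * Real.log (P x)) := Finset.sum_le_sum fun x _ => key x
    _ = -∑ x : X, P x * Real.log (P x) := by rw [Finset.sum_neg_distrib]
end
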